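/- arXiv:2003.05788 — 8 statements merged into one kernel-verified Lean document; each statement's English description precedes it below -/
import Mathlib

section
/- Let a = e^{-βω} ∈ (0,1) with β, ω > 0, and let a qubit state be parameterized by z ∈ [-1,1] via E = (ω/2)(1+z). Under the thermal process z' = z - λ[z(1+a) + 1 - a] with λ ∈ [0,1], if the process extracts positive ergotropy from a diagonal state (i.e., the final ergotropy (ω/2)(z' + |z'|) exceeds the initial ergotropy (ω/2)(z + |z|)), then necessarily z < -(1-a)/(1+a), equivalently E < ω·a/(1+a), i.e., the initial population is below the Gibbs population. -/
/-- If a thermal process `z' = z - λ[z(1+a)+1-a]`, `λ ∈ [0,1]`,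
extracts positive ergotropy from a diagonal qubit state
(final ergotropy `(ω/2)(z'+|z'|)` exceeds initial `(ω/2)(z+|z|)`), then
`z < -(1-a)/(1+a)`, equivalently `E = (ω/2)(1+z) < ω a/(1+a)`. -/
theorem positive_ergotropy_below_gibbs (β ω z lam : ℝ) (hβ : 0 < β) (hω : 0 < ω)
    (a : ℝ) (ha : a = Real.exp (-(β*ω)))
    (hz : z ∈ Set.Icc (-1 : ℝ) 1) (hlam : lam ∈ Set.Icc (0 : ℝ) 1)
    (z' : ℝ) (hz' : z' = z - lam * (z*(1+a) + 1 - a))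
    (E : ℝ) (hE : E = (ω/2)*(1+z))
    (hgain : (ω/2)*(z + |z|) < (ω/2)*(z' + |z'|)) :
    z < -(1-a)/(1+a) ∧ E < ω * a / (1+a) := by
  have ha0 : 0 < a := ha ▸ Real.exp_pos _
  have h1a : 0 < 1 + a := by linarith
  have key : z < -(1-a)/(1+a) := by
    by_contra h
    push_neg at h
    have hnum : 0 ≤ z*(1+a) + 1 - a := by
      have := (div_le_iff₀ h1a).mp h
      nlinarith
    have hle : z' ≤ z := by
      rw [hz']
      nlinarith [hlam.1, hlam.2]
    have : z' + |z'| ≤ z + |z| := by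
      rcases abs_cases z' with ⟨h1, _⟩ | ⟨h1, _⟩ <;>
        rcases abs_cases z with ⟨h2, _⟩ | ⟨h2, _⟩ <;> linarith
    have hω2 : 0 < ω/2 := by linarith
    nlinarith [hgain]
  refine ⟨key, ?_⟩
  rw [hE]
  rw [lt_div_iff₀ h1a] at key ⊢
  nlinarith
end

section
/- With a = e^{-βω} and initial diagonal qubit energy E_S (ergotropy zero, so E_S ≤ ω/2), positive ergotropy extraction via some thermal process (z' = z - λh with h = -z(1+a) - 1 + a, λ ∈ (λ₀,1]) is possible if and only if E_S < ω(1 - 1/(2a)); in particular this forces a > 1/2, i.e., ω < T log 2 where T = 1/β. -/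
/-! The final value `z + λh` is affine in `λ`, so it is positive for some `λ ∈ [0,1]` iff it is
positive at an endpoint. At `λ = 0` it is `z ≤ 0`; at `λ = 1` it is `a(1 - z) - 1`, which is
positive iff `E < ω(1 - 1/(2a))`. Since `E ≥ 0` this forces `1 - 1/(2a) > 0`, i.e. `a > 1/2`,
and taking logarithms of `e^{-βω} > 1/2` gives `βω < log 2`. -/

open Set

theorem exists_mem_Icc_pos_add_mul_iff {𝕜 : Type*} [Field 𝕜] [LinearOrder 𝕜]
    [IsStrictOrderedRing 𝕜] {z h : 𝕜} :
    (∃ t ∈ Icc (0:𝕜) 1, 0 < z + t * h) ↔ 0 < z ∨ 0 < z + h := by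
  constructor
  · rintro ⟨t, ⟨ht0, ht1⟩, hpos⟩
    by_contra! hc
    nlinarith
  · rintro (hz | hzh)
    · exact ⟨0, left_mem_Icc.2 zero_le_one, by simpa using hz⟩
    · exact ⟨1, right_mem_Icc.2 zero_le_one, by simpa using hzh⟩

theorem one_lt_mul_one_sub_iff {a ω E : ℝ} (ha : 0 < a) (hω : 0 < ω) :
    1 < a * (1 - (2 * E / ω - 1)) ↔ E < ω * (1 - 1 / (2 * a)) := by
  rw [← div_lt_iff₀' ha, ← div_lt_iff₀' hω]
  have h2a : 1 / (2 * a) = 1 / a / 2 := by ring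
  have h2E : 2 * E / ω = 2 * (E / ω) := mul_div_assoc _ _ _
  constructor <;> intro <;> linarith

theorem half_lt_of_nonneg_of_lt_mul_one_sub {a ω E : ℝ} (ha : 0 < a) (hω : 0 < ω)
    (hE : 0 ≤ E) (hlt : E < ω * (1 - 1 / (2 * a))) : 1 / 2 < a := by
  have h := pos_of_mul_pos_right (hE.trans_lt hlt) hω.le
  rw [sub_pos, div_lt_one (by positivity)] at h
  linarith

theorem lt_inv_mul_log_two_of_half_lt_exp {β ω : ℝ} (hβ : 0 < β)
    (h : 1 / 2 < Real.exp (-(β * ω))) : ω < (1 / β) * Real.log 2 := by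
  rw [← Real.log_lt_iff_lt_exp (by norm_num), one_div, Real.log_inv] at h
  rw [one_div, ← div_eq_inv_mul, lt_div_iff₀ hβ]
  linarith

/-- With `a = e^{-βω}` and an initial diagonal qubit state of
energy `E_S ≤ ω/2` (zero ergotropy), positive ergotropy extraction by some
thermal process (`z ↦ z + λh`, `h = -z(1+a)-1+a`, final ergotropy `> 0`) is
possible iff `E_S < ω(1 - 1/(2a))`; in particular this forces `a > 1/2`,
i.e. `ω < T log 2` with `T = 1/β`. -/
theorem positive_extraction_iff (β ω E : ℝ) (hβ : 0 < β) (hω : 0 < ω)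
    (hE0 : 0 ≤ E) (hE : E ≤ ω/2)
    (a z h : ℝ) (ha : a = Real.exp (-(β*ω)))
    (hzdef : z = 2*E/ω - 1) (hh : h = -z*(1+a) - 1 + a) :
    ((∃ lam ∈ Set.Icc (0:ℝ) 1, 0 < z + lam * h) ↔ E < ω * (1 - 1/(2*a))) ∧
    (E < ω * (1 - 1/(2*a)) → (1/2 < a ∧ ω < (1/β) * Real.log 2)) := by
  have ha0 : 0 < a := ha ▸ Real.exp_pos _
  have hz : z ≤ 0 := by
    rw [hzdef, sub_nonpos, div_le_one hω]
    linarith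
  have hzh : z + h = a * (1 - z) - 1 := by rw [hh]; ring
  refine ⟨?_, fun hlt => ?_⟩
  · rw [exists_mem_Icc_pos_add_mul_iff, or_iff_right hz.not_gt, hzh, sub_pos, hzdef,
      one_lt_mul_one_sub_iff ha0 hω]
  · have ha2 : 1 / 2 < a := half_lt_of_nonneg_of_lt_mul_one_sub ha0 hω hE0 hlt
    exact ⟨ha2, lt_inv_mul_log_two_of_half_lt_exp hβ (ha ▸ ha2)⟩
end

section
/- For a diagonal qubit state with initial energy E_S satisfying E_S < ω(1 - (1/2)e^{βω}), the maximal ergotropy that can be extracted by a thermal operation with a bath at inverse temperature β equals ΔR_max = 2(ω - E_S)e^{-βω} - ω, attained uniquely at the extremal process λ = 1; moreover ΔR_max > 0 under the stated hypothesis. -/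
/-- For a diagonal qubit with `E_S < ω(1 - (1/2)e^{βω})`, the
maximal ergotropy extractable by a thermal operation with a bath at inverse
temperature `β` equals `ΔR_max = 2(ω - E_S)e^{-βω} - ω`, attained uniquely at
the extremal process `λ = 1`; moreover `ΔR_max > 0`. -/
theorem optimal_ergotropy_extraction (β ω E : ℝ) (hβ : 0 < β) (hω : 0 < ω)
    (hE0 : 0 ≤ E) (hE : E < ω * (1 - Real.exp (β*ω) / 2))
    (a z : ℝ) (ha : a = Real.exp (-(β*ω))) (hz : z = 2*E/ω - 1)
    (g : ℝ → ℝ)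
    (hg : ∀ lam, g lam = (ω/2) * ((z + lam*(-z*(1+a) - 1 + a)) +
        |z + lam*(-z*(1+a) - 1 + a)|) - (ω/2) * (z + |z|)) :
    IsGreatest (g '' Set.Icc (0:ℝ) 1) (2*(ω - E)*a - ω) ∧
    (∀ lam ∈ Set.Icc (0:ℝ) 1, g lam = 2*(ω - E)*a - ω → lam = 1) ∧
    0 < 2*(ω - E)*a - ω := by
  have hexp : 1 < Real.exp (β*ω) := by
    have h0 : (0:ℝ) < β*ω := mul_pos hβ hω
    calc (1:ℝ) = Real.exp 0 := (Real.exp_zero).symm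
      _ < Real.exp (β*ω) := Real.exp_lt_exp.mpr h0
  have ha0 : 0 < a := ha ▸ Real.exp_pos _
  have hae : a * Real.exp (β*ω) = 1 := by
    rw [ha, ← Real.exp_add]
    simp
  set e := Real.exp (β*ω) with he
  have hzval : z * ω = 2*E - ω := by
    rw [hz]; field_simp
  have hzneg : z < 0 := by nlinarith
  set c := -z*(1+a) - 1 + a with hc
  have hzc : ω * (z + c) = 2*(ω-E)*a - ω := by
    rw [hc]; linear_combination (-a) * hzval
  have hMpos : 0 < 2*(ω-E)*a - ω := by
    have h1 : 0 < 2*(ω-E) - ω*e := by nlinarith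
    have h2 : ω*(a*e) = ω*1 := by rw [hae]
    nlinarith [mul_pos ha0 h1]
  have hzcpos : 0 < z + c := by nlinarith
  have hcpos : 0 < c := by linarith
  have habsz : |z| = -z := abs_of_nonpos hzneg.le
  refine ⟨⟨⟨1, by constructor <;> norm_num, ?_⟩, ?_⟩, ?_, hMpos⟩
  · -- g 1 = M
    rw [hg, habsz]
    have hw : z + 1*c = z + c := by ring
    rw [hw, abs_of_pos hzcpos]
    linear_combination hzc
  · -- upper bound
    rintro y ⟨lam, hlam, rfl⟩
    rw [hg, habsz]
    have hle : lam * c ≤ c := by nlinarith [hlam.1, hlam.2]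
    have hle2 : ω * (z + lam*c) ≤ ω * (z + c) :=
      mul_le_mul_of_nonneg_left (by linarith) hω.le
    rcases abs_cases (z + lam*c) with ⟨h1, h2⟩ | ⟨h1, h2⟩ <;> rw [h1] <;> nlinarith
  · -- uniqueness
    intro lam hlam heq
    rw [hg, habsz] at heq
    rcases abs_cases (z + lam*c) with ⟨h1, h2⟩ | ⟨h1, h2⟩ <;> rw [h1] at heq
    · have hlc : ω * (lam * c) = ω * c := by linear_combination heq - hzc
      have hlc2 : lam * c = c := mul_left_cancel₀ hω.ne' hlc
      have : (lam - 1) * c = 0 := by linarith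
      rcases mul_eq_zero.mp this with h | h
      · linarith
      · exact absurd h (ne_of_gt hcpos)
    · nlinarith
end

section
/- For the extremal thermal process (λ = 1) on a diagonal qubit, if ergotropy extraction is positive (ΔR₀(E) = 2a(ω - E) - ω > 0 with a = e^{-βω}), then the passive energy change ΔP₀(E) = (ω - E)(1 - a) is strictly positive (assuming a < 1 and E < ω). More generally, for any thermal process on a qubit with a < 1, ΔR_S > 0 implies ΔP_S > 0. -/
set_option maxHeartbeats 1000000

/-- For the extremal thermal process (`λ = 1`) on a diagonal
qubit, positive ergotropy extraction `ΔR₀(E) = 2a(ω-E) - ω > 0` implies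
positive passive-energy change `ΔP₀(E) = (ω-E)(1-a) > 0` (for `a < 1`,
`E < ω`).  More generally, for any thermal process on a qubit with `a < 1`,
`ΔR_S > 0` implies `ΔP_S > 0`. -/
theorem ergotropy_gain_implies_passive_gain (ω β a : ℝ) (hω : 0 < ω)
    (hβ : 0 < β) (ha : a = Real.exp (-(β*ω))) (ha1 : a < 1) :
    (∀ E : ℝ, E < ω → 0 < 2*a*(ω - E) - ω → 0 < (ω - E)*(1 - a)) ∧
    (∀ z α lam γ : ℝ, z ∈ Set.Icc (-1:ℝ) 1 → lam ∈ Set.Icc (0:ℝ) 1 →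
      0 ≤ γ → γ ≤ Real.sqrt ((1 - lam*a)*(1 - lam)) →
      ∀ r z' r' : ℝ,
        r = Real.sqrt (z^2 + α^2) →
        z' = z - lam * (z*(1+a) + 1 - a) →
        r' = Real.sqrt (z'^2 + γ^2*α^2) →
        0 < (ω/2)*(z' + r') - (ω/2)*(z + r) →
        0 < (ω/2)*(1 - r') - (ω/2)*(1 - r)) := by
  have ha0 : 0 < a := ha ▸ Real.exp_pos _
  constructor
  · intro E hE hR
    nlinarith
  · rintro z α lam γ ⟨hz1, hz2⟩ ⟨hl0, hl1⟩ hγ0 hγle r z' r' hr hz' hr' hR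
    have hla : lam * a ≤ a := mul_le_of_le_one_left ha0.le hl1
    have hX : 0 ≤ (1 - lam*a)*(1 - lam) :=
      mul_nonneg (by linarith) (by linarith)
    have hK : γ^2 ≤ (1 - lam*a)*(1 - lam) := by
      have h1 : γ^2 ≤ (Real.sqrt ((1 - lam*a)*(1 - lam)))^2 :=
        pow_le_pow_left₀ hγ0 hγle 2
      rwa [Real.sq_sqrt hX] at h1
    have hr2 : r^2 = z^2 + α^2 := by rw [hr]; exact Real.sq_sqrt (by positivity)
    have hr0 : 0 ≤ r := hr ▸ Real.sqrt_nonneg _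
    have hrz : |z| ≤ r := by
      rw [hr, ← Real.sqrt_sq_eq_abs]
      exact Real.sqrt_le_sqrt (by nlinarith [sq_nonneg α])
    have hr'2 : r'^2 = z'^2 + γ^2*α^2 := by
      rw [hr']; exact Real.sq_sqrt (by positivity)
    have hr'0 : 0 ≤ r' := hr' ▸ Real.sqrt_nonneg _
    have hrz' : |z'| ≤ r' := by
      rw [hr', ← Real.sqrt_sq_eq_abs]
      exact Real.sqrt_le_sqrt (by nlinarith [sq_nonneg (γ*α)])
    obtain ⟨hrzl, hrzr⟩ := abs_le.mp hrz
    obtain ⟨hrzl', hrzr'⟩ := abs_le.mp hrz'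
    have hu : z + r < z' + r' := by nlinarith
    have key : r' < r := by
      by_contra h
      push_neg at h
      rcases eq_or_lt_of_le (by linarith : (0:ℝ) ≤ z + r) with h0 | h0
      · -- z + r = 0 : α² = 0, r = -z
        have hα : α^2 = 0 := by nlinarith
        have hr'z' : r' = |z'| := by
          rw [hr', hα]; simp [Real.sqrt_sq_eq_abs]
        have hz'pos : 0 < z' := by
          rcases abs_cases z' with ⟨he, _⟩ | ⟨he, _⟩
          · nlinarith
          · nlinarith
        have hrz'' : r' = z' := by rw [hr'z', abs_of_pos hz'pos]
        rcases eq_or_lt_of_le hl0 with hl | hl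
        · nlinarith
        · nlinarith [mul_pos hl (show (0:ℝ) < 1 - a by linarith),
            mul_nonneg hl0 (mul_nonneg ha0.le hr0)]
      · -- z + r > 0
        have hw : (r' - z') * (z + r) ≤ (1 - lam*a)*(1-lam) * ((r - z)*(r + z)) := by
          nlinarith [mul_le_mul_of_nonneg_right hK (sq_nonneg α),
            mul_nonneg (show (0:ℝ) ≤ r' - z' by linarith)
              (show (0:ℝ) ≤ (z' + r') - (z + r) by linarith)]
        have hKv : r' - z' ≤ (1 - lam*a)*(1-lam) * (r - z) := by
          rcases le_or_gt (r' - z') ((1 - lam*a)*(1-lam) * (r - z)) with hle | hlt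
          · exact hle
          · nlinarith
        rcases eq_or_lt_of_le hl0 with hl | hl
        · rw [← hl] at hz' hKv
          simp at hz' hKv
          linarith
        · have hbr : 0 < (1+a-lam*a)*(r-z) + (1+a)*z + 1 - a := by
            nlinarith [mul_nonneg (mul_nonneg ha0.le (show (0:ℝ) ≤ 1-lam by linarith))
                (show (0:ℝ) ≤ r - z by linarith),
              mul_nonneg (show (0:ℝ) ≤ 1-a by linarith) (show (0:ℝ) ≤ 1-z by linarith)]
          linarith [mul_pos hl hbr]
    have := mul_pos (div_pos hω two_pos) (sub_pos.mpr key)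
    nlinarith
end

section
/- Let a_H = e^{-β_H ω}, a_C = e^{-β_C ω} satisfy e^{β_H ω} + e^{-β_C ω} < 2. Then the optimal three-stroke engine efficiency η₁ = 1 - (e^{β_H ω} - 1)/(1 - e^{-β_C ω}) and work production P₁ = ω[2e^{-β_H ω}/(1 + e^{-(β_C + β_H)ω}) - 1] are both strictly positive. -/
/-- In the regime `e^{β_H ω} + e^{-β_C ω} < 2`, the optimal
three-stroke engine efficiency `η₁` and work production `P₁` are strictly
positive. -/
theorem eta1_P1_positive (βH βC ω : ℝ) (hβH : 0 < βH) (hβC : 0 < βC)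
    (hω : 0 < ω)
    (hreg : Real.exp (βH*ω) + Real.exp (-(βC*ω)) < 2)
    (η₁ P₁ : ℝ)
    (hη : η₁ = 1 - (Real.exp (βH*ω) - 1)/(1 - Real.exp (-(βC*ω))))
    (hP : P₁ = ω * (2*Real.exp (-(βH*ω))/(1 + Real.exp (-((βC + βH)*ω))) - 1)) :
    0 < η₁ ∧ 0 < P₁ := by
  have hx : 1 < Real.exp (βH*ω) := by rw [Real.one_lt_exp_iff]; positivity
  have hy : Real.exp (-(βC*ω)) < 1 := by
    rw [Real.exp_lt_one_iff]; nlinarith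
  have hy0 : 0 < Real.exp (-(βC*ω)) := Real.exp_pos _
  constructor
  · rw [hη]
    rw [sub_pos, div_lt_one (by linarith)]
    linarith
  · rw [hP]
    have hsplit : Real.exp (-((βC + βH)*ω)) = Real.exp (-(βC*ω)) * Real.exp (-(βH*ω)) := by
      rw [← Real.exp_add]; ring_nf
    have hxH : 0 < Real.exp (-(βH*ω)) := Real.exp_pos _
    have hxinv : Real.exp (-(βH*ω)) * Real.exp (βH*ω) = 1 := by
      rw [← Real.exp_add]; simp
    have hden : 0 < 1 + Real.exp (-((βC + βH)*ω)) := by positivity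
    apply mul_pos hω
    rw [sub_pos, lt_div_iff₀ hden, one_mul, hsplit]
    nlinarith [Real.exp_pos (βH*ω)]
end

section
/- Under the regime condition e^{β_H ω} + e^{-β_C ω} < 2 (with β_H, β_C, ω > 0), the optimal efficiency η₁ = 1 - (e^{β_H ω} - 1)/(1 - e^{-β_C ω}) is strictly less than the Carnot efficiency η_C = 1 - β_H/β_C. -/
/-- In the regime `e^{β_H ω} + e^{-β_C ω} < 2`, the optimal
efficiency `η₁ = 1 - (e^{β_H ω} - 1)/(1 - e^{-β_C ω})` is strictly below the
Carnot efficiency `1 - β_H/β_C`. -/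
theorem eta1_lt_carnot (βH βC ω : ℝ) (hβH : 0 < βH) (hβC : 0 < βC)
    (hω : 0 < ω)
    (hreg : Real.exp (βH*ω) + Real.exp (-(βC*ω)) < 2) :
    1 - (Real.exp (βH*ω) - 1)/(1 - Real.exp (-(βC*ω))) < 1 - βH/βC := by
  have hx : 0 < βH * ω := mul_pos hβH hω
  have hy : 0 < βC * ω := mul_pos hβC hω
  have h1 : βH * ω < Real.exp (βH*ω) - 1 := by
    have := Real.add_one_lt_exp (ne_of_gt hx)
    linarith
  have h2 : 1 - Real.exp (-(βC*ω)) < βC * ω := by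
    have := Real.add_one_lt_exp (ne_of_lt (neg_neg_iff_pos.mpr hy : -(βC*ω) < 0))
    linarith
  have h3 : 0 < 1 - Real.exp (-(βC*ω)) := by
    have : Real.exp (-(βC*ω)) < 1 := Real.exp_lt_one_iff.mpr (by linarith)
    linarith
  have key : βH / βC < (Real.exp (βH*ω) - 1)/(1 - Real.exp (-(βC*ω))) := by
    have h4 : βH / βC = (βH * ω) / (βC * ω) := by
      field_simp
    rw [h4]
    exact div_lt_div₀ h1 (le_of_lt h2) (by linarith) h3
  linarith
end

section
/- For the diagonal three-stroke engine with extremal hot-bath stroke and maximal ergotropy storing, starting at E₀ = ω a_C a_H/(1 + a_C a_H) with a_H = e^{-β_H ω}, a_C = e^{-β_C ω}: the hot stroke sends E₀ ↦ E₁ = ω a_H/(1 + a_C a_H), the battery stroke sends E₁ ↦ E₂ = ω(1 - a_H/(1 + a_C a_H)), and the cold stroke (extremal thermal operation with the cold bath, E ↦ a_C(ω - E)) sends E₂ back to E₀, closing the cycle exactly. -/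
/-- For the optimal diagonal three-stroke engine the extremal
hot stroke `E ↦ a_H(ω-E)`, maximal ergotropy storing `E ↦ ω - E`, and extremal
cold stroke `E ↦ a_C(ω-E)` cycle the energies
`E₀ = ω a_C a_H/Z₁ ↦ E₁ = ω a_H/Z₁ ↦ E₂ = ω(1 - a_H/Z₁) ↦ E₀` exactly,
where `Z₁ = 1 + a_H a_C`. -/
theorem three_stroke_cycle_closes (βH βC ω : ℝ) (hβH : 0 < βH) (hβC : 0 < βC)
    (hω : 0 < ω)
    (aH aC Z₁ E₀ E₁ E₂ : ℝ)
    (haH : aH = Real.exp (-(βH*ω))) (haC : aC = Real.exp (-(βC*ω)))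
    (hZ : Z₁ = 1 + aH*aC)
    (hE₀ : E₀ = ω*aC*aH/Z₁)
    (hE₁ : E₁ = ω*aH/Z₁)
    (hE₂ : E₂ = ω*(1 - aH/Z₁)) :
    aH*(ω - E₀) = E₁ ∧ ω - E₁ = E₂ ∧ aC*(ω - E₂) = E₀ := by
  have hZpos : 0 < Z₁ := by
    rw [hZ, haH, haC]; positivity
  have hZne : Z₁ ≠ 0 := ne_of_gt hZpos
  subst hE₀ hE₁ hE₂
  subst hZ; refine ⟨?_, ?_, ?_⟩ <;> field_simp <;> ring
end

section
/- With Z_n = 1 + a_H^n a_C (a_H = e^{-β_H ω}, a_C = e^{-β_C ω}) and starting energy E₀ = ω a_H^n a_C / Z_n, the n-round extremal protocol produces pre-storage energies E'_k = ω a_H^k / Z_n and post-storage energies E_k = ω(1 - a_H^k / Z_n) for k = 1,…,n, the final cold-bath extremal stroke maps E_n back to E₀, and total work per cycle equals P_n = ω[2 a_H (1 - a_H^n)/((1 - a_H)(1 + a_C a_H^n)) - n]. -/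
/-- For the n-round extremal protocol with
`Z_n = 1 + a_H^n a_C` and `E₀ = ω a_H^n a_C / Z_n`, the pre-storage energies
are `E'_k = ω a_H^k / Z_n`, the post-storage energies are
`E_k = ω(1 - a_H^k/Z_n)` for `k = 1,…,n`, the final extremal cold stroke maps
`E_n` back to `E₀`, and the total work per cycle is
`P_n = ω[2a_H(1 - a_H^n)/((1-a_H)(1 + a_C a_H^n)) - n]`. -/
theorem n_round_protocol (βH βC ω : ℝ) (hβH : 0 < βH) (hβC : 0 < βC)
    (hω : 0 < ω) (n : ℕ) (hn : 1 ≤ n)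
    (aH aC Zn E₀ : ℝ)
    (haH : aH = Real.exp (-(βH*ω))) (haC : aC = Real.exp (-(βC*ω)))
    (hZ : Zn = 1 + aH^n * aC) (hE₀ : E₀ = ω * aH^n * aC / Zn)
    (E' E : ℕ → ℝ)
    (hE'1 : E' 1 = aH * (ω - E₀))
    (hEk : ∀ k, E k = ω - E' k)
    (hE'rec : ∀ k, 1 ≤ k → E' (k+1) = aH * (ω - E k)) :
    (∀ k ∈ Finset.Icc 1 n, E' k = ω * aH^k / Zn) ∧
    (∀ k ∈ Finset.Icc 1 n, E k = ω * (1 - aH^k / Zn)) ∧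
    aC * (ω - E n) = E₀ ∧
    (∑ k ∈ Finset.Icc 1 n, (2 * E' k - ω)) =
      ω * (2*aH*(1 - aH^n)/((1 - aH)*(1 + aC*aH^n)) - n) := by
  have haHpos : 0 < aH := by rw [haH]; exact Real.exp_pos _
  have haCpos : 0 < aC := by rw [haC]; exact Real.exp_pos _
  have haH1 : aH < 1 := by
    rw [haH]
    apply Real.exp_lt_one_iff.mpr
    nlinarith [mul_pos hβH hω]
  have hZpos : 0 < Zn := by
    rw [hZ]; positivity
  have hZne : Zn ≠ 0 := ne_of_gt hZpos
  have h1aH : 1 - aH ≠ 0 := by linarith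
  have key : ∀ k, 1 ≤ k → E' k = ω * aH^k / Zn := by
    intro k hk
    induction k with
    | zero => omega
    | succ m ih =>
      rcases Nat.eq_or_lt_of_le hk with h | h
      · have hm : m = 0 := by omega
        subst hm
        rw [hE'1, hE₀]
        field_simp
        rw [hZ]; ring
      · have hm : 1 ≤ m := by omega
        have := ih hm
        rw [hE'rec m hm, hEk m, this]
        field_simp
        ring
  have keyE : ∀ k, 1 ≤ k → E k = ω * (1 - aH^k / Zn) := by
    intro k hk
    rw [hEk k, key k hk]
    field_simp
  refine ⟨fun k hk => key k (Finset.mem_Icc.mp hk).1,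
    fun k hk => keyE k (Finset.mem_Icc.mp hk).1, ?_, ?_⟩
  · rw [keyE n hn, hE₀]
    field_simp
    ring
  · have hsum : (∑ k ∈ Finset.Icc 1 n, (2 * E' k - ω)) =
        (∑ k ∈ Finset.Icc 1 n, (2 * (ω * aH^k / Zn) - ω)) := by
      apply Finset.sum_congr rfl
      intro k hk
      rw [key k (Finset.mem_Icc.mp hk).1]
    rw [hsum]
    rw [Finset.sum_sub_distrib, Finset.sum_const, Nat.card_Icc]
    have hgeom : (∑ k ∈ Finset.Icc 1 n, (2 * (ω * aH^k / Zn))) =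
        2 * ω / Zn * (∑ k ∈ Finset.Icc 1 n, aH^k) := by
      rw [Finset.mul_sum]
      apply Finset.sum_congr rfl
      intro k _
      ring
    have hgs : (∑ k ∈ Finset.Icc 1 n, aH^k) = aH * (1 - aH^n) / (1 - aH) := by
      have h1 : Finset.Icc 1 n = Finset.Ico 1 (n+1) := by
        rw [Finset.Ico_add_one_right_eq_Icc]
      rw [h1, Finset.sum_Ico_eq_sub _ (by omega : 1 ≤ n + 1)]
      rw [geom_sum_eq (by intro h; rw [h] at haH1; linarith) (n+1)]
      simp only [Finset.range_one, Finset.sum_singleton, pow_zero]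
      have haHm1 : aH - 1 ≠ 0 := by intro h; apply h1aH; linarith
      field_simp
      ring
    rw [hgeom, hgs]
    rw [hZ]
    have h2 : (1 + aC * aH ^ n) ≠ 0 := by
      intro h; apply hZne; rw [hZ, ← h]; ring
    have h3 : (1 + aH ^ n * aC) ≠ 0 := by
      intro h; apply h2; rw [← h]; ring
    have hc : Nat.succ n - 1 = n := by omega
    rw [hc]
    field_simp
    ring
end
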